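/- arXiv:2504.20759 — 8 statements merged into one kernel-verified Lean document; each statement's English description precedes it below -/
import Mathlib

section
/- Let n be a positive integer and ψ a Dirichlet character modulo n with conductor m. Let ñ denote the radical of n (the product of the distinct primes dividing n), set r = lcm(ñ, m), and define ξ_n = Σ_{d : ñ∣d∣n} ζ_d ∈ ℚ(μ_n). Then Σ_{a∈(ℤ/nℤ)ˣ} \overline{ψ}(a)·σ_a(ξ_n) = Σ_{a∈(ℤ/nℤ)ˣ} \overline{ψ}(a)·σ_a(ζ_r) in ℂ; concretely, Σ_{a∈(ℤ/nℤ)ˣ} \overline{ψ}(a)·Σ_{ñ∣d∣n} e^{2πi a/d} = Σ_{a∈(ℤ/nℤ)ˣ} \overline{ψ}(a)·e^{2πi a/r}. -/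
open Complex

/-- The radical `ñ` of `n`: the product of the distinct primes dividing `n`. -/
def Nat.rad (n : ℕ) : ℕ := ∏ p ∈ n.primeFactors, p

/-!
Exchanging the two sums, the left side is `∑_{ñ ∣ d ∣ n} G(d)`, where `G(d)` is the Gauss sum of
`ψ̄ = ψ⁻¹` against the additive character `a ↦ e^{2πia/d}` of `ℤ/nℤ`, and the right side is `G(r)`.
If `G(d) ≠ 0`, then `ψ̄` factors through `d`, so `r ∣ d`. As every prime factor of `n` divides `r`,
`r` is nilpotent in `ℤ/nℤ`; hence adding `r` preserves units and `ψ̄` (which vanishes on non-units)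
is `r`-periodic. Translating the summation variable by `r` then multiplies `G(d)` by
`e^{2πir/d}`, which must therefore be `1`, i.e. `d ∣ r`. So `G(r)` is the only surviving term.
-/

theorem Nat.isNilpotent_natCast_of_rad_dvd {n e : ℕ} (hn : n ≠ 0) (h : n.rad ∣ e) :
    IsNilpotent (e : ZMod n) :=
  ⟨n, by
    rw [← Nat.cast_pow, ZMod.natCast_eq_zero_iff]
    exact (Nat.dvd_prod_primeFactors_pow_self hn).trans (pow_dvd_pow_of_dvd h n)⟩

theorem gaussSum_eq_zero_of_periodic {R R' : Type*} [CommRing R] [Fintype R] [CommRing R']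
    [IsDomain R'] {χ : MulChar R R'} {ψ : AddChar R R'} {x : R} (hχ : Function.Periodic χ x)
    (hψ : ψ x ≠ 1) : gaussSum χ ψ = 0 := by
  have hshift : ψ x * gaussSum χ ψ = gaussSum χ ψ := by
    rw [gaussSum, Finset.mul_sum]
    refine Fintype.sum_equiv (Equiv.addRight x) _ _ fun a ↦ ?_
    simp only [Equiv.coe_addRight, hχ a, AddChar.map_add_eq_mul]
    ring
  have hzero : (ψ x - 1) * gaussSum χ ψ = 0 := by linear_combination hshift
  exact (mul_eq_zero.mp hzero).resolve_left (sub_ne_zero.mpr hψ)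

namespace ZMod

variable {n d : ℕ} [NeZero d] (hd : d ∣ n)

noncomputable def stdAddCharOfDvd : AddChar (ZMod n) ℂ :=
  stdAddChar.compAddMonoidHom (castHom hd (ZMod d)).toAddMonoidHom

theorem stdAddCharOfDvd_apply [NeZero n] (a : ZMod n) :
    stdAddCharOfDvd hd a = exp (2 * Real.pi * I * (a.val : ℂ) / d) := by
  have h := stdAddChar_coe (N := d) (a.val : ℤ)
  push_cast at h
  rw [← h, stdAddCharOfDvd, AddChar.compAddMonoidHom_apply, RingHom.toAddMonoidHom_eq_coe,
    AddMonoidHom.coe_coe, castHom_apply, natCast_val]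

theorem stdAddCharOfDvd_natCast_eq_one_iff (k : ℕ) : stdAddCharOfDvd hd k = 1 ↔ d ∣ k := by
  rw [stdAddCharOfDvd, AddChar.compAddMonoidHom_apply, RingHom.toAddMonoidHom_eq_coe,
    AddMonoidHom.coe_coe, map_natCast, ← AddChar.map_zero_eq_one (stdAddChar (N := d)),
    injective_stdAddChar.eq_iff, natCast_eq_zero_iff]

theorem mulShift_stdAddCharOfDvd_self : (stdAddCharOfDvd hd).mulShift d = 1 := by
  ext a
  rw [AddChar.mulShift_apply, AddChar.one_apply, stdAddCharOfDvd, AddChar.compAddMonoidHom_apply,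
    RingHom.toAddMonoidHom_eq_coe, AddMonoidHom.coe_coe, map_mul, map_natCast, natCast_self,
    zero_mul, AddChar.map_zero_eq_one]

end ZMod

namespace DirichletCharacter

variable {n : ℕ} [NeZero n]

theorem periodic_of_factorsThrough {R : Type*} [CommMonoidWithZero R] {χ : DirichletCharacter R n}
    {e : ℕ} (hχ : χ.FactorsThrough e) (he : IsNilpotent (e : ZMod n)) :
    Function.Periodic χ (e : ZMod n) := by
  intro a
  have hunit : IsUnit (a + e) ↔ IsUnit a :=
    ⟨fun h ↦ by simpa using he.neg.isUnit_add_left_of_commute h (Commute.all _ _),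
      fun h ↦ he.isUnit_add_left_of_commute h (Commute.all _ _)⟩
  by_cases ha : IsUnit a
  · obtain ⟨u, rfl⟩ := ha
    obtain ⟨v, hv⟩ := hunit.2 u.isUnit
    rw [← hv, hχ.eq_changeLevel, changeLevel_eq_cast_of_dvd, changeLevel_eq_cast_of_dvd, hv,
      ZMod.cast_add hχ.dvd, ZMod.cast_natCast hχ.dvd, ZMod.natCast_self, add_zero]
  · rw [χ.map_nonunit ha, χ.map_nonunit (mt hunit.1 ha)]

theorem sum_units_conj_mul_exp_eq_gaussSum (ψ : DirichletCharacter ℂ n) {d : ℕ} [NeZero d]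
    (hd : d ∣ n) :
    ∑ a : (ZMod n)ˣ, starRingEnd ℂ (ψ a) * exp (2 * Real.pi * I * ((a : ZMod n).val : ℂ) / d) =
      gaussSum ψ⁻¹ (ZMod.stdAddCharOfDvd hd) := by
  refine Fintype.sum_of_injective _ Units.val_injective _ _ (fun x hx ↦ ?_) fun a ↦ ?_
  · rw [ψ⁻¹.map_nonunit fun h ↦ hx ⟨h.unit, rfl⟩, zero_mul]
  · rw [ZMod.stdAddCharOfDvd_apply, ← MulChar.star_apply', RCLike.star_def]

theorem eq_lcm_of_gaussSum_ne_zero (ψ : DirichletCharacter ℂ n) {d : ℕ} [NeZero d] (hd : d ∣ n)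
    (hrad : n.rad ∣ d) (h : gaussSum ψ⁻¹ (ZMod.stdAddCharOfDvd hd) ≠ 0) :
    d = Nat.lcm n.rad ψ.conductor := by
  have hcond : ψ.conductor ∣ d := by
    rw [← conductor_inv]
    exact conductor_dvd_of_mem_conductorSet _
      (factorsThrough_of_gaussSum_ne_zero _ hd (ZMod.mulShift_stdAddCharOfDvd_self hd) h)
  have hrd : Nat.lcm n.rad ψ.conductor ∣ d := Nat.lcm_dvd hrad hcond
  have hper : Function.Periodic ⇑(ψ⁻¹) (Nat.lcm n.rad ψ.conductor : ZMod n) := by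
    refine periodic_of_factorsThrough ?_
      (Nat.isNilpotent_natCast_of_rad_dvd (NeZero.ne n) (Nat.dvd_lcm_left _ _))
    rw [← mem_conductorSet_iff, mem_conductorSet_iff_conductor_dvd _ (hrd.trans hd), conductor_inv]
    exact Nat.dvd_lcm_right _ _
  have hdr : d ∣ Nat.lcm n.rad ψ.conductor := by
    rw [← ZMod.stdAddCharOfDvd_natCast_eq_one_iff hd]
    by_contra hne
    exact h (gaussSum_eq_zero_of_periodic hper hne)
  exact Nat.dvd_antisymm hdr hrd

end DirichletCharacter

/-- Let `n` be a positive integer, `ψ` a Dirichlet character modulo `n` with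
conductor `m`, `ñ` the radical of `n`, `r = lcm(ñ, m)` and `ξ_n = Σ_{d : ñ∣d∣n} ζ_d`.  Then
`Σ_{a ∈ (ℤ/nℤ)ˣ} ψ̄(a)·σ_a(ξ_n) = Σ_{a ∈ (ℤ/nℤ)ˣ} ψ̄(a)·σ_a(ζ_r)`; concretely, with
`σ_a(ζ_d) = e^{2πia/d}`:
`Σ_{a} ψ̄(a)·Σ_{ñ∣d∣n} e^{2πia/d} = Σ_{a} ψ̄(a)·e^{2πia/r}`. -/
theorem stmt0 (n : ℕ) [NeZero n] (ψ : DirichletCharacter ℂ n)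
    (m : ℕ) (hm : m = ψ.conductor)
    (r : ℕ) (hr : r = Nat.lcm n.rad m) :
    ∑ a : (ZMod n)ˣ, (starRingEnd ℂ) (ψ a) *
        ∑ d ∈ n.divisors.filter (fun d => n.rad ∣ d),
          Complex.exp (2 * Real.pi * Complex.I * ((a : ZMod n).val : ℂ) / (d : ℂ))
      = ∑ a : (ZMod n)ˣ, (starRingEnd ℂ) (ψ a) *
          Complex.exp (2 * Real.pi * Complex.I * ((a : ZMod n).val : ℂ) / (r : ℂ)) := by
  subst hm hr
  have hrn : Nat.lcm n.rad ψ.conductor ∣ n :=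
    Nat.lcm_dvd (Nat.prod_primeFactors_dvd n) ψ.conductor_dvd_level
  simp_rw [Finset.mul_sum]
  rw [Finset.sum_comm]
  refine Finset.sum_eq_single_of_mem _ (by simp [hrn, NeZero.ne n, Nat.dvd_lcm_left])
    fun d hd hne ↦ ?_
  obtain ⟨⟨hdn, -⟩, hrad⟩ := by simpa using hd
  have : NeZero d := ⟨ne_zero_of_dvd_ne_zero (NeZero.ne n) hdn⟩
  rw [ψ.sum_units_conj_mul_exp_eq_gaussSum hdn]
  by_contra h
  exact hne (ψ.eq_lcm_of_gaussSum_ne_zero hdn hrad h)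
end

section
/- Let m be a positive integer and s a squarefree positive integer coprime to m; set r = m·s and let ν(s) denote the number of prime divisors of s. Then Tr_{ℚ(μ_r)/ℚ(μ_m)}(ζ_r) = (−1)^{ν(s)} · ζ_m^{t}, where t is any integer with t·s ≡ 1 (mod m). -/
/-!
Pick `k` with `t s + m k = 1`. Then `ζ_r = (ζ_r^s)^t · η` with `η = ζ_r^{m k}` a primitive `s`-th
root of unity (`k` is prime to `s`), and `ζ_r^s = ζ_m` lies in the base field `ℚ(μ_m)`, so the
trace of `ζ_r` is `ζ_m^t` times the trace of `η`. Since `ℚ(μ_r) = ℚ(μ_m)(η)` has degree `φ(s)`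
over `ℚ(μ_m)`, the conjugates of `η` are all `φ(s)` primitive `s`-th roots of unity, whose sum is
`μ(s) = (-1)^{ν(s)}` by Möbius inversion of `∑_{d ∣ n} ∑_{θ of order d} θ = [n = 1]`.
-/

open Polynomial Finset IntermediateField Module Nat ArithmeticFunction ArithmeticFunction.Moebius

theorem ArithmeticFunction.moebius_eq_neg_one_pow_card_primeFactors {n : ℕ} (hn : Squarefree n) :
    μ n = (-1) ^ n.primeFactors.card := by
  rw [moebius_apply_of_squarefree hn,
    ← (cardDistinctFactors_eq_cardFactors_iff_squarefree hn.ne_zero).2 hn,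
    cardDistinctFactors_apply, Nat.primeFactors, List.card_toFinset]

theorem IntermediateField.adjoin_simple_gen_eq_top (F : Type*) {E : Type*} [Field F] [Field E]
    [Algebra F E] (α : E) : F⟮AdjoinSimple.gen F α⟯ = ⊤ := by
  apply map_injective F⟮α⟯.val
  rw [adjoin_map, Set.image_singleton, ← AlgHom.fieldRange_eq_map, fieldRange_val]
  rfl

namespace IsPrimitiveRoot

section Domain

variable {R : Type*} [CommRing R] [IsDomain R] {ζ : R} {n : ℕ} [NeZero n]

theorem sum_nthRootsFinset_one (hζ : IsPrimitiveRoot ζ n) :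
    ∑ x ∈ nthRootsFinset n (1 : R), x = if n = 1 then 1 else 0 := by
  classical
  have hroots : nthRootsFinset n (1 : R) = (range n).image (ζ ^ ·) := by
    ext x
    simp only [Polynomial.mem_nthRootsFinset (Nat.pos_of_neZero n), mem_image, mem_range]
    refine ⟨hζ.eq_pow_of_pow_eq_one, ?_⟩
    rintro ⟨i, -, rfl⟩
    rw [pow_right_comm, hζ.pow_eq_one, one_pow]
  rw [hroots, sum_image fun i hi j hj hij => hζ.pow_inj (mem_range.1 hi) (mem_range.1 hj) hij]
  split_ifs with h1
  · simp [h1]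
  · exact hζ.geom_sum_eq_zero (by have := NeZero.ne n; omega)

theorem sum_primitiveRoots_eq_moebius (hζ : IsPrimitiveRoot ζ n) :
    ∑ θ ∈ primitiveRoots n R, θ = μ n := by
  classical
  have hdivisors : ∀ d > 0, d ∈ {d | d ∣ n} →
      ∑ i ∈ d.divisors, ∑ θ ∈ primitiveRoots i R, θ = if d = 1 then 1 else 0 := by
    rintro d hd ⟨e, rfl⟩
    have : NeZero d := ⟨hd.ne'⟩
    rw [← sum_biUnion fun i _ j _ hij => IsPrimitiveRoot.disjoint hij,
      ← nthRoots_one_eq_biUnion_primitiveRoots]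
    exact (hζ.pow (Nat.pos_of_neZero _) (mul_comm d e)).sum_nthRootsFinset_one
  rw [← (sum_eq_iff_sum_mul_moebius_eq_on _ fun _ _ => dvd_trans).1 hdivisors n
      (Nat.pos_of_neZero n) dvd_rfl,
    Nat.sum_divisorsAntidiagonal' fun a b => (μ a : R) * if b = 1 then 1 else 0]
  simp [NeZero.ne n]

end Domain

theorem finrank_adjoin_rat {E : Type*} [Field E] [CharZero E] {ζ : E} {n : ℕ} [NeZero n]
    (hζ : IsPrimitiveRoot ζ n) : finrank ℚ ℚ⟮ζ⟯ = φ n := by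
  rw [adjoin.finrank (hζ.isIntegral (Nat.pos_of_neZero n)).tower_top,
    ← cyclotomic_eq_minpoly_rat hζ (Nat.pos_of_neZero n), natDegree_cyclotomic]

section Trace

variable {K L : Type*} [Field K] [Field L] [Algebra K L] [FiniteDimensional K L]
  [Algebra.IsSeparable K L]

theorem trace_eq_moebius {η : L} {n : ℕ} [NeZero n] (hη : IsPrimitiveRoot η n)
    (hgen : K⟮η⟯ = ⊤) (hdeg : finrank K L = φ n) : Algebra.trace K L η = μ n := by
  classical
  let E := AlgebraicClosure L
  have hηE : IsPrimitiveRoot (algebraMap L E η) n :=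
    hη.map_of_injective (algebraMap L E).injective
  have hinj : Function.Injective fun σ : L →ₐ[K] E => σ η := by
    refine fun σ τ hστ => AlgHom.ext_of_adjoin_eq_top (s := {η}) ?_ fun x hx => ?_
    · rw [← adjoin_simple_toSubalgebra_of_isAlgebraic (Algebra.IsAlgebraic.isAlgebraic η), hgen,
        top_toSubalgebra]
    · rw [Set.mem_singleton_iff.1 hx]
      exact hστ
  have hconjugates : univ.image (fun σ : L →ₐ[K] E => σ η) = primitiveRoots n E := by
    refine eq_of_subset_of_card_le (fun x hx => ?_) ?_
    · obtain ⟨σ, -, rfl⟩ := mem_image.1 hx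
      exact (mem_primitiveRoots (Nat.pos_of_neZero n)).2 (hη.map_of_injective σ.injective)
    · rw [card_image_of_injective _ hinj, Finset.card_univ, AlgHom.card, hdeg,
        hηE.card_primitiveRoots]
  apply (algebraMap K E).injective
  rw [trace_eq_sum_embeddings, map_intCast, ← hηE.sum_primitiveRoots_eq_moebius, ← hconjugates,
    sum_image fun σ _ τ _ h => hinj h]

theorem trace_eq_moebius_mul_zpow {ζ : L} {m s : ℕ} [NeZero m] [NeZero s]
    (hζ : IsPrimitiveRoot ζ (m * s)) (hgen : K⟮ζ⟯ = ⊤) (hdeg : finrank K L = φ s)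
    {c : K} (hc : algebraMap K L c = ζ ^ s) {t : ℤ} (ht : t * s ≡ 1 [ZMOD m]) :
    Algebra.trace K L ζ = μ s * c ^ t := by
  obtain ⟨k, hk⟩ := ht.dvd
  have hη : IsPrimitiveRoot ((ζ ^ m) ^ k) s :=
    (hζ.pow (Nat.pos_of_neZero _) rfl).zpow_of_gcd_eq_one k
      (Int.isCoprime_iff_gcd_eq_one.1 ⟨m, t, by linarith⟩)
  have hdecomp : ζ = algebraMap K L (c ^ t) * (ζ ^ m) ^ k := by
    rw [map_zpow₀, hc, ← zpow_natCast, ← zpow_natCast, ← zpow_mul, ← zpow_mul,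
      ← zpow_add₀ (hζ.ne_zero (NeZero.ne _)), show (s : ℤ) * t + m * k = 1 by linarith,
      zpow_one]
  have hηgen : K⟮(ζ ^ m) ^ k⟯ = ⊤ := by
    refine top_le_iff.1 (hgen ▸ adjoin_simple_le_iff.2 ?_)
    have hmem := mul_mem (IntermediateField.algebraMap_mem K⟮(ζ ^ m) ^ k⟯ (c ^ t))
      (mem_adjoin_simple_self K ((ζ ^ m) ^ k))
    rwa [← hdecomp] at hmem
  rw [hdecomp, ← Algebra.smul_def, map_smul, hη.trace_eq_moebius hηgen hdeg, smul_eq_mul,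
    mul_comm]

end Trace

end IsPrimitiveRoot

/-- Let `m` be a positive integer, `s` a squarefree positive integer coprime to
`m`, and `r = m·s`.  Choosing a primitive `r`-th root of unity `ζ = ζ_r ∈ ℂ` and the compatible
primitive `m`-th root `ζ_m = ζ^s`, the trace of `ζ_r` from `ℚ(μ_r) = ℚ(ζ)` to
`ℚ(μ_m) = ℚ(ζ^s)` equals `(−1)^{ν(s)}·ζ_m^t`, where `ν(s)` is the number of prime divisors of
`s` and `t` is any integer with `t·s ≡ 1 (mod m)`. -/
theorem stmt2 (m s : ℕ) (hm : 0 < m) (hsq : Squarefree s) (hcop : Nat.Coprime s m)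
    (r : ℕ) (hr : r = m * s) (ζ : ℂ) (hζ : IsPrimitiveRoot ζ r)
    (t : ℤ) (ht : t * (s : ℤ) ≡ 1 [ZMOD (m : ℤ)])
    (h : IntermediateField.adjoin ℚ {ζ ^ s} ≤ IntermediateField.adjoin ℚ {ζ}) :
    letI : Algebra (IntermediateField.adjoin ℚ {ζ ^ s}) (IntermediateField.adjoin ℚ {ζ}) :=
      (IntermediateField.inclusion h).toRingHom.toAlgebra
    Algebra.trace (IntermediateField.adjoin ℚ {ζ ^ s}) (IntermediateField.adjoin ℚ {ζ})
        ⟨ζ, IntermediateField.mem_adjoin_simple_self ℚ ζ⟩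
      = (-1 : IntermediateField.adjoin ℚ {ζ ^ s}) ^ s.primeFactors.card *
        (⟨ζ ^ s, IntermediateField.mem_adjoin_simple_self ℚ (ζ ^ s)⟩ :
          IntermediateField.adjoin ℚ {ζ ^ s}) ^ t := by
  let : Algebra ℚ⟮ζ ^ s⟯ ℚ⟮ζ⟯ := (inclusion h).toRingHom.toAlgebra
  have : IsScalarTower ℚ ℚ⟮ζ ^ s⟯ ℚ⟮ζ⟯ := IsScalarTower.of_algebraMap_eq fun _ => rfl
  have : NeZero m := ⟨hm.ne'⟩
  have : NeZero s := ⟨hsq.ne_zero⟩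
  subst hr
  have hdegL : finrank ℚ ℚ⟮ζ⟯ = φ (m * s) := hζ.finrank_adjoin_rat
  have hdegK : finrank ℚ ℚ⟮ζ ^ s⟯ = φ m :=
    (hζ.pow (Nat.pos_of_neZero _) (mul_comm m s)).finrank_adjoin_rat
  have : FiniteDimensional ℚ ℚ⟮ζ⟯ :=
    Module.finite_of_finrank_pos (hdegL ▸ Nat.totient_pos.2 (Nat.pos_of_neZero _))
  have : FiniteDimensional ℚ⟮ζ ^ s⟯ ℚ⟮ζ⟯ := FiniteDimensional.right ℚ _ _
  have hdeg : finrank ℚ⟮ζ ^ s⟯ ℚ⟮ζ⟯ = φ s := by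
    have htower := finrank_mul_finrank ℚ ℚ⟮ζ ^ s⟯ ℚ⟮ζ⟯
    rw [hdegK, hdegL, Nat.totient_mul hcop.symm] at htower
    exact Nat.eq_of_mul_eq_mul_left (Nat.totient_pos.2 hm) htower
  have hgen : ℚ⟮ζ ^ s⟯⟮AdjoinSimple.gen ℚ ζ⟯ = ⊤ :=
    adjoin_eq_top_of_adjoin_eq_top ℚ (adjoin_simple_gen_eq_top ℚ ζ)
  have htrace :=
    (IsPrimitiveRoot.coe_submonoidClass_iff.1 hζ).trace_eq_moebius_mul_zpow hgen hdeg
      (c := AdjoinSimple.gen ℚ (ζ ^ s)) rfl ht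
  rw [moebius_eq_neg_one_pow_card_primeFactors hsq] at htrace
  exact_mod_cast htrace
end

section
/- Let p be a prime, k ≥ 1, and let G = G_1 × ⋯ × G_s be a product of cyclic groups where G_i has order p^{k_i} with k_i ≥ k and a fixed generator τ_i. Let R be a commutative ring and θ = Σ_{g∈G} a_g·g an element of the group ring R[G]. Set D_i = Σ_{j=1}^{p^{k_i}−1} j·τ_i^j, D = D_1⋯D_s, and N = Σ_{g∈G} g in R[G]. Suppose that D·θ is invariant under the translation action of G modulo p^k, i.e. h·(D·θ) ≡ D·θ (mod p^k R[G]) for every h ∈ G. Then D·θ ≡ (−1)^s · (Σ_{g∈G} a_g · Π_{i=1}^{s} j_i(g)) · N (mod p^k R[G]), where for each g ∈ G the integers j_i(g) ∈ {0,…,p^{k_i}−1} are determined by g = (τ_1^{j_1(g)}, …, τ_s^{j_s(g)}). -/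
/-!
The coefficient of `D` at `g` is `∏ i, j_i(g)`, so the coefficient of `D θ` at `1` is
`∑_g a_g ∏ i, j_i(g⁻¹)`. Since `j_i(g⁻¹) ≡ -j_i(g)` modulo `p ^ κ i`, hence modulo `p ^ k`, this
constant is `(-1)^s ∑_g a_g ∏ i, j_i(g)` modulo `p ^ k`. Invariance of `D θ` modulo `p ^ k` makes
every coefficient congruent to the one at `1`, i.e. `D θ` is congruent to that constant times `N`.
-/

open Finset

theorem dvd_prod_sub_prod {ι R : Type*} [CommRing R] {r : R} (s : Finset ι) {a b : ι → R}
    (h : ∀ i ∈ s, r ∣ a i - b i) : r ∣ ∏ i ∈ s, a i - ∏ i ∈ s, b i := by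
  simp_rw [← Ideal.mem_span_singleton, ← Ideal.Quotient.eq, map_prod] at h ⊢
  exact prod_congr rfl h

theorem Finset.sum_Icc_one_pred_eq_sum_range {M : Type*} [AddCommMonoid M] (n : ℕ) {f : ℕ → M}
    (hf : f 0 = 0) : ∑ m ∈ Icc 1 (n - 1), f m = ∑ m ∈ range n, f m :=
  sum_subset (fun m => by simp only [mem_Icc, mem_range]; omega) fun m _ hm => by
    obtain rfl : m = 0 := by simp only [mem_Icc, mem_range] at *; omega
    exact hf

namespace MonoidAlgebra

section Group

variable {R G : Type*}

theorem exists_eq_smul_iff_forall_dvd_coeff [Semiring R] [Fintype G] (r : R)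
    (x : MonoidAlgebra R G) : (∃ c, x = r • c) ↔ ∀ g, r ∣ x.coeff g := by
  refine ⟨fun ⟨c, hc⟩ g => ⟨c.coeff g, by rw [hc, coeff_smul_apply, smul_eq_mul]⟩, fun h => ?_⟩
  classical
  choose c hc using h
  refine ⟨∑ g, single g (c g), ?_⟩
  ext g
  simp [hc g, Finsupp.single_apply]

theorem coeff_mul_one [Semiring R] [Group G] [Fintype G] (x y : MonoidAlgebra R G) :
    (x * y).coeff 1 = ∑ g, x.coeff g⁻¹ * y.coeff g := by
  rw [coeff_mul_apply_right, Finsupp.sum_fintype _ _ (by simp)]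
  simp

theorem dvd_coeff_one_sub_coeff [Ring R] [Group G] {r : R} {x : MonoidAlgebra R G} {g : G}
    (h : ∃ c, single g 1 * x - x = r • c) : r ∣ x.coeff 1 - x.coeff g := by
  obtain ⟨c, hc⟩ := h
  exact ⟨c.coeff g, by simpa using congrArg (fun y => y.coeff g) hc⟩

end Group

section Pi

variable (R : Type*) [CommSemiring R] {ι : Type*} [Fintype ι] [DecidableEq ι] {G : ι → Type*}
  [∀ i, CommGroup (G i)]

theorem prod_sum_single_mulSingle {α : ι → Type*} (t : ∀ i, Finset (α i)) (f : ∀ i, α i → G i)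
    (a : ∀ i, α i → R) :
    ∏ i, ∑ m ∈ t i, single (Pi.mulSingle i (f i m)) (a i m) =
      ∑ m ∈ Fintype.piFinset t, single (fun i => f i (m i)) (∏ i, a i (m i)) := by
  rw [prod_univ_sum]
  refine sum_congr rfl fun m _ => ?_
  rw [prod_single, univ_prod_mulSingle]

noncomputable def kolyvaginDerivative (τ : ∀ i, G i) : MonoidAlgebra R (∀ i, G i) :=
  ∏ i, ∑ m ∈ Icc 1 (orderOf (τ i) - 1), single (Pi.mulSingle i (τ i ^ m)) (m : R)

variable {R}

theorem kolyvaginDerivative_eq_sum [∀ i, Fintype (G i)] {τ : ∀ i, G i}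
    {j : (∀ i, G i) → ι → ℕ} (hj : ∀ g i, g i = τ i ^ j g i ∧ j g i < orderOf (τ i)) :
    kolyvaginDerivative R τ = ∑ g, single g (∏ i, (j g i : R)) := by
  have hrange : ∀ i, ∑ m ∈ Icc 1 (orderOf (τ i) - 1), single (Pi.mulSingle i (τ i ^ m)) (m : R) =
      ∑ m ∈ range (orderOf (τ i)), single (Pi.mulSingle i (τ i ^ m)) (m : R) := fun i =>
    sum_Icc_one_pred_eq_sum_range _ (by simp)
  rw [kolyvaginDerivative, prod_congr rfl fun i _ => hrange i, prod_sum_single_mulSingle]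
  have hj_pow : ∀ m ∈ Fintype.piFinset fun i => range (orderOf (τ i)),
      j (fun i => τ i ^ m i) = m := fun m hm => funext fun i =>
    pow_injOn_Iio_orderOf (hj _ i).2 (by simpa using Fintype.mem_piFinset.1 hm i) (hj _ i).1.symm
  refine sum_nbij' (fun m i => τ i ^ m i) j (by simp) (fun g _ => ?_) hj_pow
    (fun g _ => funext fun i => (hj g i).1.symm) fun m hm => by rw [hj_pow m hm]
  exact Fintype.mem_piFinset.2 fun i => mem_range.2 (hj g i).2

theorem coeff_kolyvaginDerivative [∀ i, Fintype (G i)] {τ : ∀ i, G i}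
    {j : (∀ i, G i) → ι → ℕ} (hj : ∀ g i, g i = τ i ^ j g i ∧ j g i < orderOf (τ i))
    (g : ∀ i, G i) : (kolyvaginDerivative R τ).coeff g = ∏ i, (j g i : R) := by
  classical
  simp [kolyvaginDerivative_eq_sum hj, Finsupp.single_apply]

end Pi

end MonoidAlgebra

open MonoidAlgebra

theorem stmt3_general (p : ℕ) (k : ℕ) (s : ℕ)
    (κ : Fin s → ℕ) (hκ : ∀ i, k ≤ κ i)
    (G : Fin s → Type*) [∀ i, CommGroup (G i)] [∀ i, Fintype (G i)]
    (τ : ∀ i, G i) (hcard : ∀ i, Fintype.card (G i) = p ^ κ i)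
    (hgen : ∀ i, ∀ x : G i, x ∈ Subgroup.zpowers (τ i))
    (R : Type*) [CommRing R]
    (θ : MonoidAlgebra R (∀ i, G i))
    (j : (∀ i, G i) → ∀ i : Fin s, ℕ)
    (hj : ∀ g i, g i = τ i ^ (j g i) ∧ j g i < p ^ κ i)
    (D N : MonoidAlgebra R (∀ i, G i))
    (hD : D = ∏ i : Fin s, ∑ jj ∈ Finset.Icc 1 (p ^ κ i - 1),
        MonoidAlgebra.single (Pi.mulSingle i (τ i ^ jj)) (jj : R))
    (hN : N = ∑ g : ∀ i, G i, MonoidAlgebra.single g (1 : R))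
    (hinv : ∀ h : ∀ i, G i, ∃ c : MonoidAlgebra R (∀ i, G i),
        MonoidAlgebra.single h 1 * (D * θ) - D * θ = ((p : R) ^ k) • c) :
    ∃ c : MonoidAlgebra R (∀ i, G i),
      D * θ - ((-1 : R) ^ s * ∑ g : ∀ i, G i, θ.coeff g * ∏ i, (j g i : R)) • N
        = ((p : R) ^ k) • c := by
  have hord (i : Fin s) : orderOf (τ i) = p ^ κ i := by
    rw [orderOf_eq_card_of_forall_mem_zpowers (hgen i), Nat.card_eq_fintype_card, hcard i]
  have hD_coeff (g : ∀ i, G i) : D.coeff g = ∏ i, (j g i : R) := by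
    have hcoeff := coeff_kolyvaginDerivative (R := R) (fun g i => (hord i).symm ▸ hj g i) g
    simp only [kolyvaginDerivative, hord] at hcoeff
    rwa [hD]
  have hj_inv (g : ∀ i, G i) (i : Fin s) : (p : R) ^ k ∣ (j g⁻¹ i : R) + j g i := by
    have hpow : τ i ^ (j g⁻¹ i + j g i) = 1 := by
      rw [pow_add, ← (hj g⁻¹ i).1, ← (hj g i).1, Pi.inv_apply, inv_mul_cancel]
    have hdvd := (pow_dvd_pow p (hκ i)).trans (hord i ▸ orderOf_dvd_of_pow_eq_one hpow)
    exact_mod_cast Nat.cast_dvd_cast (α := R) hdvd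
  have hconst : (p : R) ^ k ∣
      (D * θ).coeff 1 - (-1) ^ s * ∑ g, θ.coeff g * ∏ i, (j g i : R) := by
    rw [coeff_mul_one, mul_sum, ← sum_sub_distrib]
    refine dvd_sum fun g _ => ?_
    have hprod : (p : R) ^ k ∣ ∏ i, (j g⁻¹ i : R) - ∏ i, -(j g i : R) :=
      dvd_prod_sub_prod _ fun i _ => by simpa using hj_inv g i
    rw [prod_neg, card_univ, Fintype.card_fin, ← hD_coeff] at hprod
    convert dvd_mul_of_dvd_right hprod (θ.coeff g) using 1
    ring
  rw [exists_eq_smul_iff_forall_dvd_coeff]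
  intro g
  have hNg : N.coeff g = 1 := by simp [hN]
  rw [coeff_sub, Finsupp.sub_apply, coeff_smul_apply, hNg, smul_eq_mul, mul_one]
  simpa using dvd_sub hconst (dvd_coeff_one_sub_coeff (hinv g))

/-- Sakamoto's formula for the Kolyvagin derivative of a Galois-invariant
element.  Let `p` be a prime, `k ≥ 1`, and `G = G_1 × ⋯ × G_s` a product of cyclic groups where
`G_i` has order `p^{κ i} (κ i ≥ k)` and fixed generator `τ i`.  For `θ = Σ_g a_g·g ∈ R[G]`, with
`D_i = Σ_{j=1}^{p^{κ i}−1} j·τ_i^j`, `D = D_1⋯D_s` and `N = Σ_g g`, if `D·θ` is invariant under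
translation by `G` modulo `p^k R[G]`, then
`D·θ ≡ (−1)^s·(Σ_g a_g·Π_i j_i(g))·N (mod p^k R[G])`, where `g = Π_i τ_i^{j_i(g)}` with
`0 ≤ j_i(g) < p^{κ i}`. -/
theorem stmt3 (p : ℕ) (hp : p.Prime) (k : ℕ) (hk : 1 ≤ k) (s : ℕ)
    (κ : Fin s → ℕ) (hκ : ∀ i, k ≤ κ i)
    (G : Fin s → Type*) [∀ i, CommGroup (G i)] [∀ i, Fintype (G i)]
    (τ : ∀ i, G i) (hcard : ∀ i, Fintype.card (G i) = p ^ κ i)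
    (hgen : ∀ i, ∀ x : G i, x ∈ Subgroup.zpowers (τ i))
    (R : Type*) [CommRing R]
    (θ : MonoidAlgebra R (∀ i, G i))
    (j : (∀ i, G i) → ∀ i : Fin s, ℕ)
    (hj : ∀ g i, g i = τ i ^ (j g i) ∧ j g i < p ^ κ i)
    (D N : MonoidAlgebra R (∀ i, G i))
    (hD : D = ∏ i : Fin s, ∑ jj ∈ Finset.Icc 1 (p ^ κ i - 1),
        MonoidAlgebra.single (Pi.mulSingle i (τ i ^ jj)) (jj : R))
    (hN : N = ∑ g : ∀ i, G i, MonoidAlgebra.single g (1 : R))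
    (hinv : ∀ h : ∀ i, G i, ∃ c : MonoidAlgebra R (∀ i, G i),
        MonoidAlgebra.single h 1 * (D * θ) - D * θ = ((p : R) ^ k) • c) :
    ∃ c : MonoidAlgebra R (∀ i, G i),
      D * θ - ((-1 : R) ^ s * ∑ g : ∀ i, G i, θ.coeff g * ∏ i, (j g i : R)) • N
        = ((p : R) ^ k) • c :=
  stmt3_general p k s κ hκ G τ hcard hgen R θ j hj D N hD hN hinv
end

section
/- Let p be a prime and G a finite abelian group whose order is coprime to p. Then the group ring ℤ_p[G] is isomorphic, as a ring, to a finite product of complete discrete valuation rings in each of which p generates the maximal ideal (i.e. each factor is an unramified finite extension of ℤ_p, with finite residue field of characteristic p). -/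
/-
Write `A = ℤ_p[G]`. Reduction of coefficients identifies `A/pA` with `𝔽_p[G]`, which is
semisimple by Maschke's theorem since `p ∤ #G`; being finite and commutative, it is a product
of finite fields `𝔽_p[G]/𝔪`, cut out by complete orthogonal idempotents. As `A` is
`p`-adically complete it is Henselian along `pA`, so these idempotents lift (as simple roots of
`X² - X`) to complete orthogonal idempotents `eᵢ` of `A`, and `A ≅ ∏ A/(1 - eᵢ)`. Each factor
`R` is again `p`-adically complete and `p`-torsion free (it is a direct summand of `A`), and
`R/pR` is one of the fields `𝔽_p[G]/𝔪`. Then `pR` is the unique maximal ideal, `p`-adic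
separatedness writes every nonzero element as `pⁿ · unit`, and `R` is a complete DVR with
uniformizer `p`.
-/

/-- A complete discrete valuation ring in which the prime number `p` generates the maximal ideal
(i.e. an unramified finite extension of `ℤ_p`), with finite residue field of characteristic
`p`. -/
structure UnramifiedCompleteDVR (p : ℕ) : Type 1 where
  carrier : Type
  [commRing : CommRing carrier]
  [isDomain : IsDomain carrier]
  [dvr : IsDiscreteValuationRing carrier]
  complete : IsAdicComplete (IsLocalRing.maximalIdeal carrier) carrier
  p_gen : IsLocalRing.maximalIdeal carrier = Ideal.span {(p : carrier)}
  finiteResidue : Finite (IsLocalRing.ResidueField carrier)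
  charResidue : CharP (IsLocalRing.ResidueField carrier) p

attribute [instance] UnramifiedCompleteDVR.commRing UnramifiedCompleteDVR.isDomain
  UnramifiedCompleteDVR.dvr

section AdicComplete

variable {R M N : Type*} [CommRing R] [AddCommGroup M] [Module R M] [AddCommGroup N] [Module R N]
  {I : Ideal R}

theorem SModEq.map_smul_top {x y : M} (f : M →ₗ[R] N)
    (h : x ≡ y [SMOD (I • ⊤ : Submodule R M)]) :
    f x ≡ f y [SMOD (I • ⊤ : Submodule R N)] := by
  rw [SModEq.sub_mem] at h ⊢
  simpa using Submodule.smul_top_le_comap_smul_top I f h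

theorem IsAdicComplete.of_retract [IsAdicComplete I M] (s : N →ₗ[R] M) (r : M →ₗ[R] N)
    (hrs : ∀ x, r (s x) = x) : IsAdicComplete I N where
  haus' x hx := by
    have : s x = 0 := IsHausdorff.haus' (I := I) _ fun n => by
      simpa using (hx n).map_smul_top s
    rw [← hrs x, this, map_zero]
  prec' f hf := by
    obtain ⟨L, hL⟩ := IsPrecomplete.prec' (I := I) (s ∘ f) fun hmn => (hf hmn).map_smul_top s
    exact ⟨r L, fun n => by simpa [hrs] using (hL n).map_smul_top r⟩

instance IsAdicComplete.pi {ι : Type*} [Finite ι] {M : ι → Type*} [∀ i, AddCommGroup (M i)]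
    [∀ i, Module R (M i)] [∀ i, IsAdicComplete I (M i)] : IsAdicComplete I (∀ i, M i) where
  haus' x hx := funext fun i => IsHausdorff.haus' (I := I) (x i) fun n => by
    simpa using (hx n).map_smul_top (LinearMap.proj i)
  prec' f hf := by
    classical
    cases nonempty_fintype ι
    choose L hL using fun i => IsPrecomplete.prec' (I := I) (fun n => f n i)
      fun hmn => (hf hmn).map_smul_top (LinearMap.proj i)
    refine ⟨L, fun n => ?_⟩
    rw [← Finset.univ_sum_single (f n), ← Finset.univ_sum_single L]
    exact SModEq.sum fun i _ => (hL i n).map_smul_top (LinearMap.single R M i)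

end AdicComplete

namespace IsIdempotentElem

variable {A : Type*} [CommRing A] {e : A}

theorem eq_zero_of_mem_jacobson_bot (he : IsIdempotentElem e) (h : e ∈ (⊥ : Ideal A).jacobson) :
    e = 0 := by
  have hunit : IsUnit (1 - e) := by simpa [sub_eq_neg_add] using Ideal.mem_jacobson_bot.mp h (-1)
  simpa using (IsIdempotentElem.iff_eq_one_of_isUnit hunit).mp he.one_sub

variable (he : IsIdempotentElem e)
include he

theorem mem_span_one_sub_iff {x : A} : x ∈ Ideal.span {1 - e} ↔ x * e = 0 := by
  rw [← he.ker_toSpanSingleton_eq_span, LinearMap.mem_ker, LinearMap.toSpanSingleton_apply,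
    smul_eq_mul]

theorem mk_mul_eq_self (x : A) :
    Ideal.Quotient.mk (Ideal.span {1 - e}) (x * e) = Ideal.Quotient.mk _ x := by
  rw [Ideal.Quotient.eq, he.mem_span_one_sub_iff, sub_mul, mul_assoc, he.eq, sub_self]

/-- `A ⧸ (1 - e)` is a retract of `A` as an `A`-module, through `x ↦ x * e`. -/
theorem isAdicComplete_quotient_span_one_sub (I : Ideal A) [IsAdicComplete I A] :
    IsAdicComplete (I.map (Ideal.Quotient.mk (Ideal.span {1 - e}))) (A ⧸ Ideal.span {1 - e}) :=
  (IsAdicComplete.map_algebraMap_iff I _).mpr <| IsAdicComplete.of_retract (M := A)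
    ((Ideal.span {1 - e}).liftQ (LinearMap.toSpanSingleton A A e)
      he.ker_toSpanSingleton_eq_span.ge) (Ideal.Quotient.mkₐ A _).toLinearMap
    (Submodule.Quotient.induction_on _ · he.mk_mul_eq_self)

theorem isSMulRegular_quotient_span_one_sub {r : A} (hr : IsSMulRegular A r) :
    IsSMulRegular (A ⧸ Ideal.span {1 - e}) (Ideal.Quotient.mk (Ideal.span {1 - e}) r) := by
  refine isSMulRegular_iff_right_eq_zero_of_smul.mpr fun x hx => ?_
  obtain ⟨x, rfl⟩ := Ideal.Quotient.mk_surjective x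
  rw [smul_eq_mul, ← map_mul, Ideal.Quotient.eq_zero_iff_mem, he.mem_span_one_sub_iff] at hx
  rw [Ideal.Quotient.eq_zero_iff_mem, he.mem_span_one_sub_iff]
  exact hr.right_eq_zero_of_smul (by rw [smul_eq_mul, ← mul_assoc, hx])

end IsIdempotentElem

namespace HenselianRing

variable {A : Type*} [CommRing A] (I : Ideal A) [HenselianRing A I]

open Polynomial in
theorem exists_isIdempotentElem_sub_mem {x : A} (hx : x * x - x ∈ I) :
    ∃ e, IsIdempotentElem e ∧ e - x ∈ I := by
  -- `x` is a simple root of `X² - X` modulo `I`: `(2x - 1)² = 1 + 4(x² - x)`.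
  have hsimple : IsUnit (Ideal.Quotient.mk I ((derivative (X ^ 2 - X : A[X])).eval x)) := by
    refine IsUnit.of_mul_eq_one (Ideal.Quotient.mk I ((derivative (X ^ 2 - X : A[X])).eval x)) ?_
    rw [← map_mul, ← map_one (Ideal.Quotient.mk I), Ideal.Quotient.eq]
    convert I.mul_mem_left 4 hx using 1
    simp only [derivative_sub, derivative_X_pow_succ, Nat.cast_one, map_add, map_one, pow_one,
      derivative_X, eval_sub, eval_mul, eval_add, eval_one, eval_X]
    ring
  obtain ⟨e, hroot, he⟩ := HenselianRing.is_henselian (X ^ 2 - X) (by monicity!) x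
    (by simpa [sq] using hx) hsimple
  refine ⟨e, ?_, he⟩
  simpa [IsIdempotentElem, sq, sub_eq_zero] using hroot

theorem exists_completeOrthogonalIdempotents_lift {ι : Type*} [Fintype ι] {f : ι → A ⧸ I}
    (hf : CompleteOrthogonalIdempotents f) :
    ∃ e : ι → A, CompleteOrthogonalIdempotents e ∧
      ∀ i, Ideal.Quotient.mk I (e i) = f i := by
  have hjac : ∀ {x : A}, IsIdempotentElem x → Ideal.Quotient.mk I x = 0 → x = 0 :=
    fun hx h0 => hx.eq_zero_of_mem_jacobson_bot
      (HenselianRing.jac (Ideal.Quotient.eq_zero_iff_mem.mp h0))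
  have hlift : ∀ i, ∃ e : A, IsIdempotentElem e ∧ Ideal.Quotient.mk I e = f i := by
    intro i
    obtain ⟨x, hx⟩ := Ideal.Quotient.mk_surjective (f i)
    obtain ⟨e, he, hex⟩ := exists_isIdempotentElem_sub_mem I (x := x) (by
      rw [← Ideal.Quotient.eq_zero_iff_mem, map_sub, map_mul, hx, hf.idem i, sub_self])
    exact ⟨e, he, (Ideal.Quotient.eq.mpr hex).trans hx⟩
  choose e he hef using hlift
  have hortho : OrthogonalIdempotents e :=
    ⟨he, fun i j hij => hjac ((he i).mul (he j)) (by rw [map_mul, hef, hef, hf.ortho hij])⟩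
  refine ⟨e, ⟨hortho, ?_⟩, hef⟩
  have := hjac hortho.isIdempotentElem_sum.one_sub (by
    rw [map_sub, map_one, map_sum]; simp only [hef]; rw [hf.complete, sub_self])
  exact (sub_eq_zero.mp this).symm

end HenselianRing

universe u in
theorem IsArtinianRing.exists_completeOrthogonalIdempotents_isMaximal (B : Type u) [CommRing B]
    [IsArtinianRing B] [IsReduced B] :
    ∃ (ι : Type u) (_ : Fintype ι) (f : ι → B), CompleteOrthogonalIdempotents f ∧
      ∀ i, (Ideal.span {1 - f i}).IsMaximal := by
  classical
  let φ := (IsArtinianRing.equivPi B).toRingEquiv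
  have : Fintype (MaximalSpectrum B) := Fintype.ofFinite _
  refine ⟨MaximalSpectrum B, inferInstance,
    (φ.symm : (∀ m : MaximalSpectrum B, B ⧸ m.asIdeal) →+* B) ∘ (Pi.single · 1),
    (CompleteOrthogonalIdempotents.single _).map _, fun m => ?_⟩
  have hφ : (Pi.evalRingHom (fun m : MaximalSpectrum B => B ⧸ m.asIdeal) m).comp
      (φ : B →+* _) = Ideal.Quotient.mk m.asIdeal := by
    ext x; rfl
  convert m.isMaximal
  rw [← Ideal.mk_ker (I := m.asIdeal), ← hφ, ← RingHom.comap_ker, RingHom.ker_evalRingHom,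
    Ideal.comap_coe, ← Ideal.map_symm, Ideal.map_span, Set.image_singleton, map_sub, map_one]
  rfl

section Uniformizer

open IsLocalRing

variable {R : Type*} [CommRing R] {π : R} [IsHausdorff (Ideal.span {π}) R]

theorem IsHausdorff.eq_zero_of_forall_pow_dvd {x : R} (h : ∀ n, π ^ n ∣ x) : x = 0 :=
  IsHausdorff.haus' (I := Ideal.span {π}) x fun n => by
    simpa [SModEq.zero, Ideal.span_singleton_pow, Ideal.mem_span_singleton] using h n

variable [IsLocalRing R] (hπ : maximalIdeal R = Ideal.span {π})
include hπ

theorem exists_eq_pow_mul_unit_of_maximalIdeal_eq_span {x : R} (hx : x ≠ 0) :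
    ∃ (n : ℕ) (u : Rˣ), x = π ^ n * u := by
  have hfin : FiniteMultiplicity π x := by
    by_contra! h
    exact hx (IsHausdorff.eq_zero_of_forall_pow_dvd fun n => (pow_dvd_pow π n.le_succ).trans (h n))
  obtain ⟨c, hc, hndvd⟩ := hfin.exists_eq_pow_mul_and_not_dvd
  have hunit : IsUnit c := by
    by_contra h
    have hc : c ∈ maximalIdeal R := h
    rw [hπ, Ideal.mem_span_singleton] at hc
    exact hndvd hc
  exact ⟨_, hunit.unit, hc⟩

theorem isDomain_of_maximalIdeal_eq_span (hreg : IsSMulRegular R π) : IsDomain R := by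
  refine @NoZeroDivisors.to_isDomain R _ _ ⟨fun {a b} hab => ?_⟩
  by_contra! h
  obtain ⟨n, u, rfl⟩ := exists_eq_pow_mul_unit_of_maximalIdeal_eq_span hπ h.1
  obtain ⟨m, v, rfl⟩ := exists_eq_pow_mul_unit_of_maximalIdeal_eq_span hπ h.2
  have : ((u * v : Rˣ) : R) = 0 := (hreg.pow (n + m)).right_eq_zero_of_smul (by
    rw [smul_eq_mul, ← hab, Units.val_mul, pow_add]; ring)
  exact (u * v).ne_zero this

theorem isDiscreteValuationRing_of_maximalIdeal_eq_span [IsDomain R] (hπ0 : π ≠ 0) :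
    IsDiscreteValuationRing R :=
  .ofHasUnitMulPowIrreducibleFactorization
    ⟨π, IsDiscreteValuationRing.irreducible_of_span_eq_maximalIdeal π hπ0 hπ, fun hx =>
      let ⟨n, u, h⟩ := exists_eq_pow_mul_unit_of_maximalIdeal_eq_span hπ hx
      ⟨n, u, h.symm⟩⟩

end Uniformizer

namespace UnramifiedCompleteDVR

open IsLocalRing in
noncomputable def ofIsAdicComplete (p : ℕ) [Fact p.Prime] (R : Type) [CommRing R]
    [hmax : (Ideal.span {(p : R)}).IsMaximal] [IsAdicComplete (Ideal.span {(p : R)}) R]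
    [Finite (R ⧸ Ideal.span {(p : R)})] (hreg : IsSMulRegular R (p : R)) :
    UnramifiedCompleteDVR p :=
  have : IsLocalRing R := isLocalRing_of_isAdicComplete_maximal (Ideal.span {(p : R)})
  have hπ : maximalIdeal R = Ideal.span {(p : R)} := (eq_maximalIdeal hmax).symm
  have : IsDomain R := isDomain_of_maximalIdeal_eq_span hπ hreg
  { carrier := R
    dvr := isDiscreteValuationRing_of_maximalIdeal_eq_span hπ
      fun h0 => IsSMulRegular.not_zero (h0 ▸ hreg)
    complete := by rw [hπ]; infer_instance
    p_gen := hπ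
    finiteResidue := Finite.of_equiv _ (Ideal.quotEquivOfEq hπ.symm).toEquiv
    charResidue := (CharP.charP_iff_prime_eq_zero Fact.out).mpr <| by
      rw [← map_natCast (residue R), residue_eq_zero_iff, hπ]
      exact Ideal.mem_span_singleton_self _ }

variable (p : ℕ) [Fact p.Prime] {A : Type} [CommRing A] [IsAdicComplete (Ideal.span {(p : A)}) A]
  [Finite (A ⧸ Ideal.span {(p : A)})]

noncomputable def ofIdempotent (hreg : IsSMulRegular A (p : A)) {e : A} (he : IsIdempotentElem e)
    (hmax : (Ideal.span {1 - Ideal.Quotient.mk (Ideal.span {(p : A)}) e}).IsMaximal) :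
    UnramifiedCompleteDVR p :=
  let K := Ideal.span {1 - e}
  let P := Ideal.span {(p : A)}
  have hK : P.map (Ideal.Quotient.mk K) = Ideal.span {(p : A ⧸ K)} := by
    rw [Ideal.map_span, Set.image_singleton, map_natCast]
  let φ : (A ⧸ K) ⧸ Ideal.span {(p : A ⧸ K)} ≃+*
      (A ⧸ P) ⧸ Ideal.span {1 - Ideal.Quotient.mk P e} :=
    (Ideal.quotEquivOfEq hK.symm).trans <| (DoubleQuot.quotQuotEquivComm K P).trans <|
      Ideal.quotEquivOfEq (by rw [Ideal.map_span, Set.image_singleton, map_sub, map_one])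
  have : (Ideal.span {(p : A ⧸ K)}).IsMaximal := Ideal.Quotient.maximal_of_isField _ <|
    MulEquiv.isField ((Ideal.Quotient.maximal_ideal_iff_isField_quotient _).mp hmax) φ.toMulEquiv
  have : Finite ((A ⧸ P) ⧸ Ideal.span {1 - Ideal.Quotient.mk P e}) :=
    Finite.of_surjective _ Ideal.Quotient.mk_surjective
  have : Finite ((A ⧸ K) ⧸ Ideal.span {(p : A ⧸ K)}) := Finite.of_equiv _ φ.symm.toEquiv
  have : IsAdicComplete (Ideal.span {(p : A ⧸ K)}) (A ⧸ K) :=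
    hK ▸ he.isAdicComplete_quotient_span_one_sub P
  ofIsAdicComplete p (A ⧸ K) (by simpa using he.isSMulRegular_quotient_span_one_sub hreg)

end UnramifiedCompleteDVR

theorem exists_ringEquiv_pi_unramifiedCompleteDVR (p : ℕ) [Fact p.Prime] (A : Type) [CommRing A]
    [IsAdicComplete (Ideal.span {(p : A)}) A] [Finite (A ⧸ Ideal.span {(p : A)})]
    [IsReduced (A ⧸ Ideal.span {(p : A)})] (hreg : IsSMulRegular A (p : A)) :
    ∃ (ι : Type) (_ : Fintype ι) (R : ι → UnramifiedCompleteDVR p),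
      Nonempty (A ≃+* ∀ i, (R i).carrier) := by
  obtain ⟨ι, _, f, hf, hmax⟩ :=
    IsArtinianRing.exists_completeOrthogonalIdempotents_isMaximal (A ⧸ Ideal.span {(p : A)})
  obtain ⟨e, he, hef⟩ := HenselianRing.exists_completeOrthogonalIdempotents_lift _ hf
  exact ⟨ι, inferInstance,
    fun i => .ofIdempotent p hreg (he.idem i) (by rw [hef]; exact hmax i),
    ⟨RingEquiv.ofBijective _ he.bijective_pi⟩⟩

namespace MonoidAlgebra

theorem ker_mapRingHom {R S M : Type*} [CommRing R] [CommRing S] [Monoid M] (f : R →+* S) :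
    RingHom.ker (mapRingHom M f) = (RingHom.ker f).map (algebraMap R R[M]) := by
  refine le_antisymm (fun x hx => ?_) (Ideal.map_le_iff_le_comap.mpr fun r hr => ?_)
  · rw [← sum_coeff_single x]
    refine Ideal.sum_mem _ fun m _ => ?_
    rw [single_eq_algebraMap_mul_of, Algebra.commutes]
    refine Ideal.mul_mem_left _ _ (Ideal.mem_map_of_mem _ ?_)
    rw [RingHom.mem_ker, ← coeff_mapRingHom, hx, coeff_zero, Finsupp.zero_apply]
  · rw [Ideal.mem_comap, RingHom.mem_ker, ← RingHom.comp_apply, mapRingHom_comp_algebraMap,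
      RingHom.comp_apply, RingHom.mem_ker.mp hr, map_zero]

theorem isAdicComplete_map_algebraMap {R M : Type*} [CommRing R] [CommMonoid M] [Finite M]
    (I : Ideal R) [IsAdicComplete I R] :
    IsAdicComplete (I.map (algebraMap R R[M])) R[M] := by
  let e : R[M] ≃ₗ[R] (M → R) :=
    (coeffLinearEquiv R).trans (Finsupp.linearEquivFunOnFinite R R M)
  exact (IsAdicComplete.map_algebraMap_iff I _).mpr
    (.of_retract e.toLinearMap e.symm.toLinearMap e.symm_apply_apply)

end MonoidAlgebra

namespace PadicInt

variable (p : ℕ) [Fact p.Prime] (G : Type) [CommGroup G]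

instance [Finite G] :
    IsAdicComplete (Ideal.span {(p : MonoidAlgebra ℤ_[p] G)}) (MonoidAlgebra ℤ_[p] G) := by
  have := MonoidAlgebra.isAdicComplete_map_algebraMap (M := G) (IsLocalRing.maximalIdeal ℤ_[p])
  rwa [maximalIdeal_eq_span_p, Ideal.map_span, Set.image_singleton, map_natCast] at this

theorem isSMulRegular_natCast_groupRing :
    IsSMulRegular (MonoidAlgebra ℤ_[p] G) (p : MonoidAlgebra ℤ_[p] G) := by
  rw [← map_natCast (algebraMap ℤ_[p] _), isSMulRegular_algebraMap_iff]
  exact (IsRegular.of_ne_zero (by exact_mod_cast (Fact.out : p.Prime).ne_zero)).isSMulRegular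

noncomputable def groupRingQuotientEquiv :
    MonoidAlgebra ℤ_[p] G ⧸ Ideal.span {(p : MonoidAlgebra ℤ_[p] G)} ≃+*
      MonoidAlgebra (ZMod p) G :=
  (Ideal.quotEquivOfEq (by
    rw [MonoidAlgebra.ker_mapRingHom, ker_toZMod, maximalIdeal_eq_span_p, Ideal.map_span,
      Set.image_singleton, map_natCast])).trans <|
    RingHom.quotientKerEquivOfSurjective <|
      MonoidAlgebra.map_surjective _ (ZMod.ringHom_surjective toZMod)

end PadicInt

/-- Let `p` be a prime and `G` a finite abelian group with `p ∤ #G`.  Then the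
group ring `ℤ_p[G]` is isomorphic, as a ring, to a finite product of complete discrete valuation
rings in each of which `p` generates the maximal ideal (each factor being an unramified finite
extension of `ℤ_p` with finite residue field of characteristic `p`). -/
theorem stmt5 (p : ℕ) [Fact p.Prime] (G : Type) [CommGroup G] [Fintype G]
    (hG : ¬ p ∣ Fintype.card G) :
    ∃ (ι : Type) (_ : Fintype ι) (R : ι → UnramifiedCompleteDVR p),
      Nonempty (MonoidAlgebra ℤ_[p] G ≃+* ∀ i, (R i).carrier) := by
  have : NeZero (Nat.card G : ZMod p) :=
    ⟨by rwa [Nat.card_eq_fintype_card, Ne, ZMod.natCast_eq_zero_iff]⟩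
  let φ := PadicInt.groupRingQuotientEquiv p G
  have : Finite (MonoidAlgebra (ZMod p) G) := Finite.of_equiv _
    (MonoidAlgebra.coeffEquiv.trans Finsupp.equivFunOnFinite).symm
  have : Finite (MonoidAlgebra ℤ_[p] G ⧸ Ideal.span {(p : MonoidAlgebra ℤ_[p] G)}) :=
    Finite.of_equiv _ φ.symm.toEquiv
  have : IsReduced (MonoidAlgebra ℤ_[p] G ⧸ Ideal.span {(p : MonoidAlgebra ℤ_[p] G)}) :=
    isReduced_of_injective φ φ.injective
  exact exists_ringEquiv_pi_unramifiedCompleteDVR p _ (PadicInt.isSMulRegular_natCast_groupRing p G)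
end

section
/- Let R be an artinian local principal ideal ring of length k, with maximal ideal 𝔪 and residue field R/𝔪, and let M be a finitely generated R-module. Then the maximal cardinality of an R-linearly independent subset of M equals dim_{R/𝔪}(𝔪^{k−1}M). -/
open IsLocalRing Pointwise Module

/-- Let `R` be an artinian local principal ideal ring of length `k` (for such a
ring, having length `k` means precisely `𝔪^k = 0` and `𝔪^j ≠ 0` for `j < k`), with maximal
ideal `𝔪` and residue field `R/𝔪`, and let `M` be a finitely generated `R`-module.  Then the
maximal cardinality of an `R`-linearly independent family in `M` equals
`dim_{R/𝔪}(𝔪^{k−1}·M)`, where `𝔪^{k−1}·M` is an `R/𝔪`-vector space since it is killed by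
`𝔪` (hypothesis `h`, which always holds). -/
theorem stmt10 (R : Type*) [CommRing R] [IsArtinianRing R] [IsLocalRing R]
    [IsPrincipalIdealRing R] (k : ℕ)
    (hk : IsLocalRing.maximalIdeal R ^ k = ⊥)
    (hk' : ∀ j < k, IsLocalRing.maximalIdeal R ^ j ≠ ⊥)
    (M : Type*) [AddCommGroup M] [Module R M] [Module.Finite R M]
    (h : Module.IsTorsionBySet R
        ↥(IsLocalRing.maximalIdeal R ^ (k - 1) • (⊤ : Submodule R M))
        ((IsLocalRing.maximalIdeal R : Ideal R) : Set R)) :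
    letI := h.module
    IsGreatest {n : ℕ | ∃ v : Fin n → M, LinearIndependent R v}
      (Module.finrank (R ⧸ IsLocalRing.maximalIdeal R)
        ↥(IsLocalRing.maximalIdeal R ^ (k - 1) • (⊤ : Submodule R M))) := by
  classical
  letI := h.module
  -- k ≥ 1
  have hk1 : 1 ≤ k := by
    by_contra hc
    interval_cases k
    simp only [pow_zero, Ideal.one_eq_top] at hk
    have h1 : (1 : R) ∈ (⊥ : Ideal R) := hk ▸ Submodule.mem_top
    simp at h1
  have he : (k - 1) + 1 = k := Nat.succ_pred_eq_of_pos hk1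
  -- generator of 𝔪
  obtain ⟨π, hπ⟩ := (IsPrincipalIdealRing.principal (maximalIdeal R)).principal
  rw [Ideal.submodule_span_eq] at hπ
  have hπpow : ∀ j, maximalIdeal R ^ j = Ideal.span {π ^ j} := by
    intro j; rw [hπ, Ideal.span_singleton_pow]
  have hπe : π ^ (k - 1) ≠ 0 := by
    intro h0
    exact hk' (k-1) (by omega) (by rw [hπpow, h0, Ideal.span_singleton_eq_bot.mpr rfl])
  -- annihilator fact
  have hann : ∀ c : R, c * π ^ (k - 1) = 0 ↔ c ∈ maximalIdeal R := by
    intro c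
    constructor
    · intro h0
      by_contra hcm
      have hu : IsUnit c := by
        rwa [IsLocalRing.mem_maximalIdeal, mem_nonunits_iff, not_not] at hcm
      obtain ⟨u, rfl⟩ := hu
      exact hπe (by simpa using congrArg (fun x => (↑u⁻¹ : R) * x) h0)
    · intro hcm
      have hmem : c * π ^ (k-1) ∈ maximalIdeal R ^ k := by
        rw [← he, pow_succ']
        exact Ideal.mul_mem_mul hcm (by rw [hπpow]; exact Ideal.mem_span_singleton_self _)
      rw [hk] at hmem
      simpa using hmem
  -- valuation
  have hval : ∀ g : R, g ≠ 0 → ∃ v, v < k ∧ g ∈ maximalIdeal R ^ v ∧ g ∉ maximalIdeal R ^ (v + 1) := by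
    intro g hg
    have hP : ∃ j, g ∉ maximalIdeal R ^ j := ⟨k, by rw [hk]; simpa using hg⟩
    have hw0 : Nat.find hP ≠ 0 := by
      intro h0
      have hns := Nat.find_spec hP
      rw [h0] at hns
      simp [Ideal.one_eq_top] at hns
    refine ⟨Nat.find hP - 1, ?_, ?_, ?_⟩
    · have : Nat.find hP ≤ k := Nat.find_le (by rw [hk]; simpa using hg)
      omega
    · by_contra hmem
      exact (Nat.find_min hP (m := Nat.find hP - 1) (by omega)) hmem
    · have heq : Nat.find hP - 1 + 1 = Nat.find hP := by omega
      rw [heq]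
      exact Nat.find_spec hP
  -- key nonvanishing
  have hkey : ∀ g : R, ∀ v, v < k → g ∈ maximalIdeal R ^ v → g ∉ maximalIdeal R ^ (v + 1) →
      π ^ (k - 1 - v) * g ≠ 0 := by
    intro g v hvk hgv hgv1 h0
    rw [hπpow] at hgv
    obtain ⟨a, ha⟩ := Ideal.mem_span_singleton'.mp hgv
    rw [← ha, ← mul_assoc, mul_comm (π ^ (k-1-v)) a, mul_assoc, ← pow_add] at h0
    have hev : k - 1 - v + v = k - 1 := by omega
    rw [hev] at h0
    have ham : a ∈ maximalIdeal R := (hann a).mp h0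
    apply hgv1
    rw [← ha, pow_succ']
    exact Ideal.mul_mem_mul ham (by rw [hπpow]; exact Ideal.mem_span_singleton_self _)
  -- finiteness
  haveI hfinR : Module.Finite R ↥(maximalIdeal R ^ (k-1) • (⊤ : Submodule R M)) :=
    Module.Finite.iff_fg.mpr (IsNoetherian.noetherian _)
  haveI hst : IsScalarTower R (R ⧸ maximalIdeal R)
      ↥(maximalIdeal R ^ (k-1) • (⊤ : Submodule R M)) := h.isScalarTower
  haveI hfinκ : Module.Finite (R ⧸ maximalIdeal R)
      ↥(maximalIdeal R ^ (k-1) • (⊤ : Submodule R M)) :=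
    Module.Finite.of_restrictScalars_finite R _ _
  constructor
  · -- membership
    show ∃ v : Fin _ → M, LinearIndependent R v
    have hNsmul : maximalIdeal R ^ (k-1) • (⊤ : Submodule R M)
        = π ^ (k-1) • (⊤ : Submodule R M) := by
      rw [hπpow, Submodule.ideal_span_singleton_smul]
    letI : Field (R ⧸ maximalIdeal R) := Ideal.Quotient.field _
    have b := Module.finBasis (R ⧸ maximalIdeal R)
      ↥(maximalIdeal R ^ (k-1) • (⊤ : Submodule R M))
    have hbm : ∀ i, ∃ m : M, π ^ (k-1) • m = (b i : M) := by
      intro i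
      have hx : (b i : M) ∈ π ^ (k-1) • (⊤ : Submodule R M) := hNsmul ▸ (b i).2
      obtain ⟨m, -, hm⟩ := Set.mem_smul_set.mp hx
      exact ⟨m, hm⟩
    choose m hm using hbm
    refine ⟨m, ?_⟩
    rw [Fintype.linearIndependent_iff]
    intro g hg
    by_contra hcon
    push_neg at hcon
    obtain ⟨i₁, hi₁⟩ := hcon
    have hs : (Finset.univ.filter (fun i => g i ≠ 0)).Nonempty :=
      ⟨i₁, by simp [hi₁]⟩
    set s := Finset.univ.filter (fun i => g i ≠ 0) with hs'
    have hν : ∀ i, g i ≠ 0 → ∃ v, v < k ∧ g i ∈ maximalIdeal R ^ v ∧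
        g i ∉ maximalIdeal R ^ (v + 1) := fun i hgi => hval (g i) hgi
    classical
    let ν : Fin _ → ℕ := fun i => if hgi : g i ≠ 0 then (hν i hgi).choose else 0
    have hνspec : ∀ i, g i ≠ 0 → ν i < k ∧ g i ∈ maximalIdeal R ^ (ν i) ∧
        g i ∉ maximalIdeal R ^ (ν i + 1) := by
      intro i hgi
      simp only [ν, dif_pos hgi]
      exact (hν i hgi).choose_spec
    set v := s.inf' hs ν with hv'
    obtain ⟨i₀, hi₀s, hi₀⟩ := Finset.exists_mem_eq_inf' hs ν
    have hgi₀ : g i₀ ≠ 0 := (Finset.mem_filter.mp hi₀s).2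
    have hvi : v = ν i₀ := hi₀
    have hvk : v < k := by rw [hvi]; exact (hνspec i₀ hgi₀).1
    have hvle : v ≤ k - 1 := by omega
    -- coefficients
    have hc : ∀ i, ∃ c : R, c * π ^ (k-1) = π ^ (k - 1 - v) * g i := by
      intro i
      have hmem : π ^ (k - 1 - v) * g i ∈ maximalIdeal R ^ (k-1) := by
        by_cases hgi : g i = 0
        · simp [hgi]
        · have hiv : v ≤ ν i := hv' ▸ Finset.inf'_le ν (Finset.mem_filter.mpr ⟨Finset.mem_univ i, hgi⟩)
          have h1 : π ^ (k - 1 - v) ∈ maximalIdeal R ^ (k - 1 - v) :=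
            Ideal.pow_mem_pow (hπ ▸ Ideal.mem_span_singleton_self π) _
          have h2 := Ideal.mul_mem_mul h1 (hνspec i hgi).2.1
          rw [← pow_add] at h2
          exact Ideal.pow_le_pow_right (by omega) h2
      rw [hπpow] at hmem
      exact Ideal.mem_span_singleton'.mp hmem
    choose c hcs using hc
    -- sum is zero in N
    have hsum : ∑ i, c i • b i = 0 := by
      apply Subtype.ext
      push_cast
      calc ∑ i, c i • (b i : M) = ∑ i, (π ^ (k - 1 - v)) • (g i • m i) := by
            refine Finset.sum_congr rfl fun j _ => ?_
            rw [← hm j, ← mul_smul, hcs j, mul_smul]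
        _ = (π ^ (k - 1 - v)) • ∑ i, g i • m i := by rw [Finset.smul_sum]
        _ = 0 := by rw [hg, smul_zero]
    have hsumκ : ∑ i, (Ideal.Quotient.mk (maximalIdeal R) (c i)) • b i = 0 := by
      rw [← hsum]
      exact Finset.sum_congr rfl fun j _ => rfl
    have hcz := Fintype.linearIndependent_iff.mp b.linearIndependent _ hsumκ
    have hzero : ∀ i, π ^ (k - 1 - v) * g i = 0 := by
      intro i
      rw [← hcs i]
      exact (hann (c i)).mpr (Ideal.Quotient.eq_zero_iff_mem.mp (hcz i))
    refine hkey (g i₀) v hvk ?_ ?_ (hzero i₀)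
    · rw [hvi]; exact (hνspec i₀ hgi₀).2.1
    · rw [hvi]; exact (hνspec i₀ hgi₀).2.2
  · -- upper bound
    rintro n ⟨w, hw⟩
    have hmem : ∀ i, π ^ (k-1) • w i ∈ maximalIdeal R ^ (k-1) • (⊤ : Submodule R M) :=
      fun i => Submodule.smul_mem_smul
        (by rw [hπpow]; exact Ideal.mem_span_singleton_self _) Submodule.mem_top
    have hui : LinearIndependent (R ⧸ maximalIdeal R)
        (fun i : Fin n => (⟨π ^ (k-1) • w i, hmem i⟩ :
          ↥(maximalIdeal R ^ (k-1) • (⊤ : Submodule R M)))) := by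
      rw [Fintype.linearIndependent_iff]
      intro g hg i
      choose c hc using fun i => Ideal.Quotient.mk_surjective (I := maximalIdeal R) (g i)
      have hg' : ∑ j, c j • (⟨π ^ (k-1) • w j, hmem j⟩ :
          ↥(maximalIdeal R ^ (k-1) • (⊤ : Submodule R M))) = 0 := by
        rw [← hg]
        refine Finset.sum_congr rfl fun j _ => ?_
        rw [← hc j]
        rfl
      have hg'' : ∑ j, (c j * π ^ (k-1)) • w j = 0 := by
        have hcoe := congrArg Subtype.val hg'
        simpa [mul_smul, mul_comm] using hcoe
      have hz := Fintype.linearIndependent_iff.mp hw _ hg'' i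
      rw [← hc i, Ideal.Quotient.eq_zero_iff_mem]
      exact (hann (c i)).mp hz
    simpa using hui.fintype_card_le_finrank
end

section
/- Let s ≥ 1 and let e_1 ≥ e_2 ≥ ⋯ ≥ e_s ≥ 1 be integers; set e_j = 0 for j > s and m_i = Σ_{j>i} e_j for i ≥ 0. Let (n_i)_{i≥0} be a sequence of nonnegative integers such that: (a) n_i ≥ m_i for all i ≥ 0; (b) for all i ≥ 1, if n_{i−1} > m_{i−1} then n_i = m_i; and (c) for all i ≥ 1, if n_i > m_i then e_i = e_{i+1}. Then for every i ≥ 1 one has 2·m_i = min(2·n_i, n_{i−1} + n_{i+1}). -/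
/-- Let `s ≥ 1` and `e_1 ≥ e_2 ≥ ⋯ ≥ e_s ≥ 1` with `e_j = 0` for `j > s`, and
set `m_i = Σ_{j>i} e_j`. If `(n_i)` is a sequence of nonnegative integers with (a) `n_i ≥ m_i`,
(b) `n_{i−1} > m_{i−1} → n_i = m_i`, and (c) `n_i > m_i → e_i = e_{i+1}` (for `i ≥ 1`), then for
every `i ≥ 1` one has `2·m_i = min(2·n_i, n_{i−1} + n_{i+1})`. -/
theorem stmt13 (s : ℕ) (hs : 1 ≤ s) (e : ℕ → ℕ)
    (he_anti : ∀ i j, 1 ≤ i → i ≤ j → j ≤ s → e j ≤ e i)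
    (he_pos : ∀ i, 1 ≤ i → i ≤ s → 1 ≤ e i)
    (he_zero : ∀ j, s < j → e j = 0)
    (m : ℕ → ℕ) (hm : ∀ i, m i = ∑ j ∈ Finset.Ioc i s, e j)
    (n : ℕ → ℕ)
    (ha : ∀ i, m i ≤ n i)
    (hb : ∀ i, 1 ≤ i → m (i - 1) < n (i - 1) → n i = m i)
    (hc : ∀ i, 1 ≤ i → m i < n i → e i = e (i + 1)) :
    ∀ i, 1 ≤ i → 2 * m i = min (2 * n i) (n (i - 1) + n (i + 1)) := by
  have hm_rec : ∀ i, 1 ≤ i → m (i - 1) = e i + m i := by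
    intro i hi
    rcases le_or_gt i s with h | h
    · have h1 : Finset.Ioc (i - 1) s = insert i (Finset.Ioc i s) := by
        ext x; simp only [Finset.mem_Ioc, Finset.mem_insert]; omega
      rw [hm, hm, h1, Finset.sum_insert (by simp)]
    · rw [hm, hm, he_zero i h, Finset.Ioc_eq_empty (by omega),
        Finset.Ioc_eq_empty (by omega)]; simp
  intro i hi
  have hstep : e (i + 1) ≤ e i := by
    rcases le_or_gt (i + 1) s with h | h
    · exact he_anti i (i + 1) hi (by omega) h
    · rw [he_zero (i + 1) h]; exact Nat.zero_le _
  have h1 : m (i - 1) = e i + m i := hm_rec i hi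
  have h2 : m i = e (i + 1) + m (i + 1) := by
    have := hm_rec (i + 1) (by omega); simpa using this
  rcases eq_or_lt_of_le (ha i) with heq | hlt
  · -- n i = m i
    have ha1 : m (i - 1) ≤ n (i - 1) := ha (i - 1)
    have ha2 : m (i + 1) ≤ n (i + 1) := ha (i + 1)
    omega
  · -- n i > m i
    have hn1 : n (i + 1) = m (i + 1) := hb (i + 1) (by omega) (by simpa using hlt)
    have hn0 : n (i - 1) = m (i - 1) := by
      rcases eq_or_lt_of_le (ha (i - 1)) with h | h
      · omega
      · exact absurd (hb i hi h) (by omega)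
    have he : e i = e (i + 1) := hc i hi hlt
    omega
end

section
/- Let G be a group, S a finite normal subgroup of G, and p a prime not dividing the order of S. Let M be a G-module with p·M = 0 (i.e. an 𝔽_p-linear representation of G) such that the submodule of S-invariants vanishes: M^S = 0. Then the first group cohomology H¹(G, M) vanishes. -/
/-!
A 1-cocycle on `G` restricts to a 1-cocycle on the finite group `S`; averaging it over `S`, which
is possible since `|S|` is invertible mod `p`, shows that the restriction is a coboundary. By the
inflation-restriction sequence `H¹(G ⧸ S, M^S) → H¹(G, M) → H¹(S, M)`, whose outer terms vanish,
`H¹(G, M) = 0`.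
-/

universe u

open CategoryTheory Representation

namespace groupCohomology

variable {k G : Type u} [CommRing k] [Group G]

theorem subsingleton_H1_of_forall_mem_coboundaries₁ {A : Rep k G}
    (h : ∀ f : cocycles₁ A, ⇑f ∈ coboundaries₁ A) : Subsingleton (H1 A) := by
  refine subsingleton_of_forall_eq 0 fun x => ?_
  induction x using H1_induction_on with
  | h f => exact (H1π_eq_zero_iff f).2 (h f)

instance subsingleton_H1_of_subsingleton (A : Rep k G) [Subsingleton A] :
    Subsingleton (H1 A) :=
  subsingleton_H1_of_forall_mem_coboundaries₁ fun f =>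
    Subsingleton.elim (0 : G → A) f ▸ (coboundaries₁ A).zero_mem

theorem card_smul_cocycles₁_apply_eq [Fintype G] {A : Rep k G} (f : cocycles₁ A) (g : G) :
    Nat.card G • f g = ∑ t, f t - A.ρ g (∑ t, f t) := by
  have hf := (mem_cocycles₁_iff f).1 f.2
  have hshift : ∑ t, f (g * t) = ∑ t, f t :=
    Fintype.sum_equiv (Equiv.mulLeft g) _ _ fun _ => rfl
  simp only [hf, Finset.sum_add_distrib, ← map_sum, Finset.sum_const, Finset.card_univ] at hshift
  rw [Nat.card_eq_fintype_card]
  exact eq_sub_of_add_eq' hshift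

theorem mem_coboundaries₁_of_isUnit_card [Finite G] (hG : IsUnit (Nat.card G : k))
    {A : Rep k G} (f : cocycles₁ A) : ⇑f ∈ coboundaries₁ A := by
  have := Fintype.ofFinite G
  obtain ⟨c, hc⟩ := hG.exists_left_inv
  refine ⟨-(c • ∑ t, f t), funext fun g => ?_⟩
  have := congrArg (c • ·) (card_smul_cocycles₁_apply_eq f g)
  simp only [← Nat.cast_smul_eq_nsmul k, smul_smul, hc, one_smul] at this
  simp [this, smul_sub, neg_add_eq_sub]

theorem subsingleton_H1_of_isUnit_card [Finite G] (hG : IsUnit (Nat.card G : k)) (A : Rep k G) :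
    Subsingleton (H1 A) :=
  subsingleton_H1_of_forall_mem_coboundaries₁ (mem_coboundaries₁_of_isUnit_card hG)

theorem subsingleton_H1_of_invariants_eq_bot {A : Rep k G} {S : Subgroup G} [S.Normal]
    (hinv : invariants (A.ρ.comp S.subtype) = ⊥) (hres : Subsingleton (H1 (Rep.res S.subtype A))) :
    Subsingleton (H1 A) := by
  have : Subsingleton (A.quotientToInvariants S) := Submodule.subsingleton_iff_eq_bot.2 hinv
  rw [← ModuleCat.isZero_iff_subsingleton] at hres ⊢
  exact (H1InfRes_exact A S).isZero_X₂
    ((ModuleCat.isZero_of_subsingleton (H1 (A.quotientToInvariants S))).eq_of_src _ _)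
    (hres.eq_of_tgt _ _)

end groupCohomology

/-- Let `G` be a group, `S` a finite normal subgroup of `G`, and `p` a prime
not dividing the order of `S`.  Let `M` be a `G`-module with `p·M = 0` (an `𝔽_p`-linear
representation `A` of `G`) whose submodule of `S`-invariants vanishes.  Then `H¹(G, M) = 0`. -/
theorem stmt14 (p : ℕ) [Fact p.Prime] (G : Type) [Group G]
    (S : Subgroup G) [S.Normal] [Finite S] (hpS : ¬ p ∣ Nat.card S)
    (A : Rep (ZMod p) G)
    (hinv : Representation.invariants (A.ρ.comp S.subtype) = ⊥) :
    Subsingleton (groupCohomology.H1 A) := by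
  have hunit : IsUnit (Nat.card S : ZMod p) :=
    (ZMod.isUnit_iff_coprime _ p).2 ((Nat.Prime.coprime_iff_not_dvd Fact.out).2 hpS).symm
  exact groupCohomology.subsingleton_H1_of_invariants_eq_bot hinv
    (groupCohomology.subsingleton_H1_of_isUnit_card hunit _)
end

section
/- Let n be a positive integer, ψ a Dirichlet character modulo n with conductor m, and d' a divisor of n such that m does not divide d'. Then for every element x of the subfield ℚ(μ_{d'}) ⊆ ℚ(μ_n) one has Σ_{a∈(ℤ/nℤ)ˣ} \overline{ψ}(a)·σ_a(x) = 0. -/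
open Complex

/-!
The characters of `(ℤ/nℤ)ˣ` killing the kernel of the reduction `(ℤ/nℤ)ˣ → (ℤ/d'ℤ)ˣ` are exactly
those whose conductor divides `d'`, so there is a unit `h ≡ 1 (mod d')` with `ψ h ≠ 1`. Such an `h`
fixes `ζ^(n/d')`, hence all of `ℚ(μ_{d'})`, so `σ_{ah} x = σ_a x`. Substituting `a ↦ ah` in the
sum multiplies it by `ψ̄(h) ≠ 1`, so the sum vanishes.
-/

namespace DirichletCharacter

theorem exists_unitsMap_eq_one_apply_ne_one {R : Type*} [CommMonoidWithZero R] {n : ℕ} [NeZero n]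
    (χ : DirichletCharacter R n) {d : ℕ} (hd : d ∣ n) (hχ : ¬ χ.conductor ∣ d) :
    ∃ h : (ZMod n)ˣ, ZMod.unitsMap hd h = 1 ∧ χ h ≠ 1 := by
  have hfactor : ¬ χ.FactorsThrough d := fun h ↦ hχ (χ.conductor_dvd_of_mem_conductorSet h)
  rw [factorsThrough_iff_ker_unitsMap hd, SetLike.not_le_iff_exists] at hfactor
  obtain ⟨h, hker, hχh⟩ := hfactor
  refine ⟨h, hker, fun h1 ↦ hχh ?_⟩
  rw [MonoidHom.mem_ker, Units.ext_iff, MulChar.coe_toUnitHom, h1, Units.val_one]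

end DirichletCharacter

theorem ZMod.val_modEq_of_unitsMap_eq {d n : ℕ} [NeZero n] (hd : d ∣ n) {a b : (ZMod n)ˣ}
    (h : ZMod.unitsMap hd a = ZMod.unitsMap hd b) : (a : ZMod n).val ≡ (b : ZMod n).val [MOD d] := by
  rw [← ZMod.natCast_eq_natCast_iff, ZMod.natCast_val, ZMod.natCast_val, ← ZMod.unitsMap_val hd,
    ← ZMod.unitsMap_val hd, h]

theorem Fintype.sum_mul_eq_zero_of_mul_right_invariant {G R : Type*} [Group G] [Fintype G]
    [CommRing R] [NoZeroDivisors R] (χ : G →* R) (f : G → R) {h : G}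
    (hf : ∀ a, f (a * h) = f a) (hχ : χ h ≠ 1) : ∑ a, χ a * f a = 0 := by
  have hshift : ∑ a, χ a * f a = χ h * ∑ a, χ a * f a := by
    calc ∑ a, χ a * f a = ∑ a, χ (a * h) * f (a * h) :=
          (Fintype.sum_equiv (Equiv.mulRight h) _ _ fun _ ↦ rfl).symm
      _ = χ h * ∑ a, χ a * f a := by
          rw [Finset.mul_sum]
          exact Finset.sum_congr rfl fun a _ ↦ by rw [hf, map_mul]; ring
  have hzero : (χ h - 1) * ∑ a, χ a * f a = 0 := by rw [sub_mul, one_mul, ← hshift, sub_self]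
  exact (mul_eq_zero.mp hzero).resolve_left (sub_ne_zero.mpr hχ)

theorem IntermediateField.algHom_apply_eq_of_mem_adjoin_simple {F E L : Type*} [Field F] [Field E]
    [Field L] [Algebra F E] [Algebra F L] {K : IntermediateField F E} {α : E} (hα : α ∈ K)
    {φ₁ φ₂ : K →ₐ[F] L} (h : φ₁ ⟨α, hα⟩ = φ₂ ⟨α, hα⟩) {x : K} (hx : (x : E) ∈ adjoin F {α}) :
    φ₁ x = φ₂ x := by
  have hle : adjoin F {α} ≤ K := (adjoin_simple_le_iff).mpr hα
  have hext : φ₁.comp (inclusion hle) = φ₂.comp (inclusion hle) :=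
    adjoin_algHom_ext F fun _ hy ↦ by subst hy; exact h
  exact DFunLike.congr_fun hext ⟨x, hx⟩

/-- Let `n` be a positive integer, `ψ` a Dirichlet character modulo `n` with
conductor `m`, and `d'` a divisor of `n` with `m ∤ d'`.  Fix a primitive `n`-th root of unity
`ζ ∈ ℂ`, so that `ℚ(μ_n) = ℚ(ζ)` and `ℚ(μ_{d'}) = ℚ(ζ^{n/d'})`, and let `σ_a` (for
`a ∈ (ℤ/nℤ)ˣ`) be the automorphism of `ℚ(μ_n)` with `σ_a(ζ) = ζ^a` (so `σ_a(ζ_d) = ζ_d^a`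
for all `d ∣ n`).  Then for every `x ∈ ℚ(μ_{d'})` one has
`Σ_{a ∈ (ℤ/nℤ)ˣ} ψ̄(a)·σ_a(x) = 0`. -/
theorem stmt15 (n : ℕ) [NeZero n] (ψ : DirichletCharacter ℂ n)
    (d' : ℕ) (hd' : d' ∣ n) (hcond : ¬ ψ.conductor ∣ d')
    (ζ : ℂ) (hζ : IsPrimitiveRoot ζ n)
    (σ : (ZMod n)ˣ →
      (IntermediateField.adjoin ℚ {ζ} ≃ₐ[ℚ] IntermediateField.adjoin ℚ {ζ}))
    (hσ : ∀ a : (ZMod n)ˣ, ∀ y : IntermediateField.adjoin ℚ {ζ},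
      (y : ℂ) = ζ → ((σ a y : ℂ) = ζ ^ ((a : ZMod n).val)))
    (x : IntermediateField.adjoin ℚ {ζ})
    (hx : (x : ℂ) ∈ IntermediateField.adjoin ℚ {ζ ^ (n / d')}) :
    ∑ a : (ZMod n)ˣ, (starRingEnd ℂ) (ψ a) * ((σ a x : ℂ)) = 0 := by
  obtain ⟨h, hh, hψh⟩ := ψ.exists_unitsMap_eq_one_apply_ne_one hd' hcond
  have hζK : ζ ∈ IntermediateField.adjoin ℚ {ζ} := IntermediateField.mem_adjoin_simple_self ℚ ζ
  have hμK : ζ ^ (n / d') ∈ IntermediateField.adjoin ℚ {ζ} := pow_mem hζK _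
  have hμ : (ζ ^ (n / d')) ^ d' = 1 := by rw [← pow_mul, Nat.div_mul_cancel hd', hζ.pow_eq_one]
  have hσμ (a : (ZMod n)ˣ) : (σ a ⟨_, hμK⟩ : ℂ) = (ζ ^ (n / d')) ^ (a : ZMod n).val := by
    rw [show (⟨_, hμK⟩ : IntermediateField.adjoin ℚ {ζ}) = ⟨ζ, hζK⟩ ^ (n / d') from rfl, map_pow,
      IntermediateField.coe_pow, hσ a _ rfl, ← pow_mul, ← pow_mul, mul_comm]
  have hinv (a : (ZMod n)ˣ) : (σ (a * h) x : ℂ) = σ a x := by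
    refine congrArg _ (IntermediateField.algHom_apply_eq_of_mem_adjoin_simple hμK
      (φ₁ := (σ (a * h)).toAlgHom) (φ₂ := (σ a).toAlgHom) (Subtype.ext ?_) hx)
    refine (hσμ _).trans ((pow_eq_pow_of_modEq ?_ hμ).trans (hσμ a).symm)
    exact ZMod.val_modEq_of_unitsMap_eq hd' (by rw [map_mul, hh, mul_one])
  let ψbar : (ZMod n)ˣ →* ℂ :=
    (starRingEnd ℂ).toMonoidHom.comp (ψ.toMonoidHom.comp (Units.coeHom (ZMod n)))
  exact Fintype.sum_mul_eq_zero_of_mul_right_invariant ψbar (fun a ↦ (σ a x : ℂ)) hinv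
    ((map_ne_one_iff _ (starRingEnd ℂ).injective).mpr hψh)
end
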